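/- Let x ∈ ℝ, a^{-1} ≤ 0, and a^0,...,a^n ∈ ℝ. There exists f in the Pick class with f(z) = a^{-1}/(z-x) + a^0 + a^1(z-x) + ... + a^n(z-x)^n + o((z-x)^n) nontangentially if and only if a^{-1} ≤ 0 and there exists F in the Pick class with F(z) = a^0 + a^1(z-x) + ... + a^n(z-x)^n + o((z-x)^n) nontangentially. Moreover, any Pick-class f satisfying the first expansion with some real a^{-1} necessarily has a^{-1} ≤ 0, and F(z) = f(z) - a^{-1}/(z-x) is again in the Pick class. -/

import Mathlib

open Complex Filter Finset Metric Set

noncomputable section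

/-- The open upper half-plane. -/
def UHP : Set ℂ := {z : ℂ | 0 < z.im}

/-- The Pick class: analytic functions on the upper half-plane with nonnegative
imaginary part there. -/
def IsPick (f : ℂ → ℂ) : Prop :=
  DifferentiableOn ℂ f UHP ∧ ∀ z ∈ UHP, 0 ≤ (f z).im

/-- A nontangential approach region at `x ∈ ℝ` with aperture `K`. -/
def ntRegion (x K : ℝ) : Set ℂ := {z : ℂ | 0 < z.im ∧ ‖z - x‖ ≤ K * z.im}

/-- `f z → L` as `z → x` nontangentially in the upper half-plane. -/
def NTTendsto (f : ℂ → ℂ) (x : ℝ) (L : ℂ) : Prop :=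
  ∀ K > 0, Tendsto f (nhdsWithin (x : ℂ) (ntRegion x K)) (nhds L)

/-- `r z = o((z-x)^n)` as `z → x` nontangentially. -/
def NTLittleO (r : ℂ → ℂ) (x : ℝ) (n : ℕ) : Prop :=
  NTTendsto (fun z => r z / (z - (x : ℂ)) ^ n) x 0

/-- `f` has the pseudo-Taylor expansion of order `n` about `x` with coefficients `c`. -/
def HasPseudoTaylor (f : ℂ → ℂ) (x : ℝ) (n : ℕ) (c : ℕ → ℂ) : Prop :=
  NTLittleO (fun z => f z - ∑ j ∈ Finset.range (n + 1), c j * (z - (x : ℂ)) ^ j) x n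

/-! Along the vertical ray `z = x + iy` the expansion gives `y f(x + iy) → -i a⁻¹`. Since
`Im (y f) ≥ 0` this forces `a⁻¹ ≤ 0`. Julia's inequality — the half-plane Schwarz–Pick lemma
(through the Cayley transform and the Schwarz lemma) with one point sent to `x` along the
ray — then yields `Im f(w) |w - x|² ≥ -a⁻¹ Im w`, i.e. `Im (f(w) - a⁻¹/(w - x)) ≥ 0`.
Conversely, adding `a⁻¹/(z - x)` with `a⁻¹ ≤ 0` keeps a function in the Pick class and leaves
the remainder unchanged. -/

open ComplexConjugate Topology

lemma sub_ofReal_ne_zero {z : ℂ} (hz : 0 < z.im) (x : ℝ) : z - x ≠ 0 := by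
  intro h
  simp [sub_eq_zero.mp h] at hz

lemma sub_conj_ne_zero {u p : ℂ} (hu : 0 < u.im) (hp : 0 < p.im) : u - conj p ≠ 0 := by
  intro h
  have := congrArg im h
  simp only [sub_im, conj_im, sub_neg_eq_add, zero_im] at this
  linarith

lemma ofReal_add_I_mul_mem_UHP (x : ℝ) {y : ℝ} (hy : 0 < y) : (x : ℂ) + I * y ∈ UHP := by
  simpa [UHP] using hy

lemma tendsto_ofReal_nhdsGT_zero : Tendsto (fun y : ℝ => (y : ℂ)) (𝓝[>] 0) (𝓝 0) :=
  tendsto_nhdsWithin_of_tendsto_nhds (by simpa using continuous_ofReal.tendsto 0)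

lemma tendsto_ray_nhds (x : ℝ) :
    Tendsto (fun y : ℝ => (x : ℂ) + I * y) (𝓝[>] 0) (𝓝 (x : ℂ)) := by
  simpa using (tendsto_ofReal_nhdsGT_zero.const_mul I).const_add (x : ℂ)

lemma tendsto_ray_ntRegion (x : ℝ) :
    Tendsto (fun y : ℝ => (x : ℂ) + I * y) (𝓝[>] 0) (𝓝[ntRegion x 1] (x : ℂ)) :=
  tendsto_nhdsWithin_iff.2 ⟨tendsto_ray_nhds x, eventually_nhdsWithin_of_forall fun y hy =>
    ⟨ofReal_add_I_mul_mem_UHP x hy, by simp [abs_of_pos (show 0 < y from hy)]⟩⟩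

lemma NTTendsto.tendsto_ray {f : ℂ → ℂ} {x : ℝ} {L : ℂ} (h : NTTendsto f x L) :
    Tendsto (fun y : ℝ => f (x + I * y)) (𝓝[>] 0) (𝓝 L) :=
  (h 1 one_pos).comp (tendsto_ray_ntRegion x)

lemma NTLittleO.ntTendsto_zero {r : ℂ → ℂ} {x : ℝ} {n : ℕ} (h : NTLittleO r x n) :
    NTTendsto r x 0 := by
  intro K hK
  have hpow : Tendsto (fun z : ℂ => (z - x) ^ n) (𝓝[ntRegion x K] (x : ℂ)) (𝓝 ((x - x) ^ n)) :=
    tendsto_nhdsWithin_of_tendsto_nhds ((continuous_id.sub continuous_const).pow n).continuousAt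
  have hprod := hpow.mul (h K hK)
  rw [mul_zero] at hprod
  refine hprod.congr' (eventually_nhdsWithin_of_forall fun z hz => ?_)
  exact mul_div_cancel₀ _ (pow_ne_zero _ (sub_ofReal_ne_zero hz.1 x))

lemma tendsto_ofReal_mul_ray_of_ntLittleO {f P : ℂ → ℂ} {x : ℝ} {b : ℂ} {n : ℕ}
    (hP : Continuous P) (h : NTLittleO (fun z => f z - b / (z - x) - P z) x n) :
    Tendsto (fun y : ℝ => (y : ℂ) * f (x + I * y)) (𝓝[>] 0) (𝓝 (-I * b)) := by
  have hrest := h.ntTendsto_zero.tendsto_ray.add ((hP.tendsto _).comp (tendsto_ray_nhds x))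
  have hlim := (tendsto_ofReal_nhdsGT_zero.mul hrest).add_const (-I * b)
  rw [zero_mul, zero_add] at hlim
  refine hlim.congr' (eventually_nhdsWithin_of_forall fun y hy => ?_)
  have hy : (y : ℂ) ≠ 0 := ofReal_ne_zero.mpr (ne_of_gt hy)
  have hpole : (y : ℂ) * (b / (I * y)) = -I * b := by
    rw [mul_div_left_comm, mul_comm I, div_mul_cancel_left₀ hy, inv_I]
    ring
  simp only [Function.comp_apply, add_sub_cancel_left, sub_add_cancel]
  rw [mul_sub, hpole]
  ring

lemma differentiableOn_pole (x : ℝ) (b : ℂ) : DifferentiableOn ℂ (fun z => b / (z - x)) UHP :=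
  (differentiableOn_const b).div (differentiableOn_id.sub_const _)
    fun _ hz => sub_ofReal_ne_zero hz x

lemma im_ofReal_div_sub_ofReal (b x : ℝ) (z : ℂ) :
    ((b : ℂ) / (z - x)).im = -(b * z.im) / normSq (z - x) := by
  simp [div_im, neg_div]

lemma isPick_pole (x : ℝ) {b : ℝ} (hb : b ≤ 0) : IsPick fun z => (b : ℂ) / (z - x) := by
  refine ⟨differentiableOn_pole x b, fun z hz => ?_⟩
  rw [im_ofReal_div_sub_ofReal]
  exact div_nonneg (neg_nonneg.mpr (mul_nonpos_of_nonpos_of_nonneg hb (le_of_lt hz)))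
    (normSq_nonneg _)

lemma IsPick.add {f g : ℂ → ℂ} (hf : IsPick f) (hg : IsPick g) : IsPick fun z => f z + g z :=
  ⟨hf.1.add hg.1, fun z hz => by simpa only [add_im] using add_nonneg (hf.2 z hz) (hg.2 z hz)⟩

lemma IsPick.im_nonneg_of_tendsto_mul_ray {f : ℂ → ℂ} (hf : IsPick f) {x : ℝ} {L : ℂ}
    (hL : Tendsto (fun y : ℝ => (y : ℂ) * f (x + I * y)) (𝓝[>] 0) (𝓝 L)) : 0 ≤ L.im :=
  ge_of_tendsto ((continuous_im.tendsto L).comp hL) (eventually_nhdsWithin_of_forall fun y hy => by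
    simpa using mul_nonneg (le_of_lt hy) (hf.2 _ (ofReal_add_I_mul_mem_UHP x hy)))

def cayley (w z : ℂ) : ℂ := (z - w) / (z - conj w)

def cayleyInv (w ζ : ℂ) : ℂ := (w - conj w * ζ) / (1 - ζ)

lemma normSq_cayley {w z : ℂ} (hz : 0 < z.im) (hw : 0 < w.im) :
    normSq (cayley w z) = 1 - 4 * z.im * w.im / normSq (z - conj w) := by
  have hN : normSq (z - conj w) ≠ 0 := normSq_eq_zero.not.mpr (sub_conj_ne_zero hz hw)
  have hsub : normSq (z - w) = normSq (z - conj w) - 4 * z.im * w.im := by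
    simp only [normSq_apply, sub_re, sub_im, conj_re, conj_im]
    ring
  rw [cayley, normSq_div, hsub, sub_div, div_self hN]

lemma norm_cayley_lt_one {w z : ℂ} (hz : 0 < z.im) (hw : 0 < w.im) : ‖cayley w z‖ < 1 := by
  have hN : 0 < normSq (z - conj w) := normSq_pos.mpr (sub_conj_ne_zero hz hw)
  have hsq : ‖cayley w z‖ ^ 2 < 1 := by
    rw [Complex.sq_norm, normSq_cayley hz hw]
    have : 0 < 4 * z.im * w.im / normSq (z - conj w) := by positivity
    linarith
  exact (sq_lt_one_iff₀ (norm_nonneg _)).mp hsq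

lemma cayleyInv_zero (w : ℂ) : cayleyInv w 0 = w := by
  simp [cayleyInv]

lemma cayleyInv_cayley {w z : ℂ} (hz : 0 < z.im) (hw : 0 < w.im) :
    cayleyInv w (cayley w z) = z := by
  have hzw := sub_conj_ne_zero hz hw
  have hww := sub_conj_ne_zero hw hw
  rw [cayleyInv, cayley, div_eq_iff]
  · field_simp
    ring
  · rw [one_sub_div hzw]
    exact div_ne_zero (by simpa using hww) hzw

lemma im_cayleyInv_pos {w ζ : ℂ} (hw : 0 < w.im) (hζ : ‖ζ‖ < 1) : 0 < (cayleyInv w ζ).im := by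
  have hζ1 : normSq ζ < 1 := by
    rw [← Complex.sq_norm]
    exact (sq_lt_one_iff₀ (norm_nonneg _)).mpr hζ
  have hne : 1 - ζ ≠ 0 := sub_ne_zero.mpr fun h => by simp [← h] at hζ
  have him : (w - conj w * ζ).im * (1 - ζ).re - (w - conj w * ζ).re * (1 - ζ).im
      = w.im * (1 - normSq ζ) := by
    simp only [sub_im, sub_re, mul_im, mul_re, conj_re, conj_im, normSq_apply, one_re, one_im]
    ring
  rw [cayleyInv, div_im, div_sub_div_same, him]
  have : 0 < 1 - normSq ζ := by linarith
  have := normSq_pos.mpr hne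
  positivity

lemma norm_cayley_le_of_mapsTo_UHP {g : ℂ → ℂ} (hd : DifferentiableOn ℂ g UHP)
    (hg : MapsTo g UHP UHP) {w z : ℂ} (hw : w ∈ UHP) (hz : z ∈ UHP) :
    ‖cayley (g w) (g z)‖ ≤ ‖cayley w z‖ := by
  have hψ : MapsTo (cayleyInv w) (ball 0 1) UHP := fun ζ hζ =>
    im_cayleyInv_pos hw (mem_ball_zero_iff.mp hζ)
  have hdψ : DifferentiableOn ℂ (cayleyInv w) (ball 0 1) :=
    ((differentiableOn_const w).sub (differentiableOn_id.const_mul _)).div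
      ((differentiableOn_const 1).sub differentiableOn_id) fun ζ hζ =>
        sub_ne_zero.mpr fun h => by simp [← h] at hζ
  have hdg := hd.comp hdψ hψ
  have hschwarz := Complex.norm_le_norm_of_mapsTo_ball
    (f := fun ζ => cayley (g w) (g (cayleyInv w ζ)))
    ((hdg.sub_const _).div (hdg.sub_const _) fun ζ hζ => sub_conj_ne_zero (hg (hψ hζ)) (hg hw))
    (fun ζ hζ => ball_subset_closedBall
      (mem_ball_zero_iff.mpr (norm_cayley_lt_one (hg (hψ hζ)) (hg hw))))
    (by simp [cayleyInv_zero, cayley]) (norm_cayley_lt_one hz hw)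
  rwa [cayleyInv_cayley hz hw] at hschwarz

lemma im_mul_im_mul_normSq_le_of_mapsTo_UHP {g : ℂ → ℂ} (hd : DifferentiableOn ℂ g UHP)
    (hg : MapsTo g UHP UHP) {w z : ℂ} (hw : w ∈ UHP) (hz : z ∈ UHP) :
    z.im * w.im * normSq (g z - conj (g w)) ≤ (g z).im * (g w).im * normSq (z - conj w) := by
  have hsq : normSq (cayley (g w) (g z)) ≤ normSq (cayley w z) := by
    rw [← Complex.sq_norm, ← Complex.sq_norm]
    gcongr
    exact norm_cayley_le_of_mapsTo_UHP hd hg hw hz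
  rw [normSq_cayley (hg hz) (hg hw), normSq_cayley hz hw, sub_le_sub_iff_left,
    div_le_div_iff₀ (normSq_pos.mpr (sub_conj_ne_zero hz hw))
      (normSq_pos.mpr (sub_conj_ne_zero (hg hz) (hg hw)))] at hsq
  linarith

lemma im_mul_normSq_le_of_tendsto_mul_ray {g : ℂ → ℂ} (hd : DifferentiableOn ℂ g UHP)
    (hg : MapsTo g UHP UHP) {x : ℝ} {L : ℂ}
    (hL : Tendsto (fun y : ℝ => (y : ℂ) * g (x + I * y)) (𝓝[>] 0) (𝓝 L))
    {w : ℂ} (hw : w ∈ UHP) :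
    w.im * normSq L ≤ L.im * (g w).im * normSq (w - x) := by
  -- Schwarz–Pick at `z = x + iy`, multiplied by `y`, in the limit `y → 0⁺`.
  have hpointwise : ∀ y ∈ Ioi (0 : ℝ),
      w.im * normSq ((y : ℂ) * g (x + I * y) - y * conj (g w)) ≤
        ((y : ℂ) * g (x + I * y)).im * (g w).im * normSq ((x : ℂ) + I * y - conj w) := by
    intro y hy
    have hy : 0 < y := hy
    have hschwarzPick :=
      im_mul_im_mul_normSq_le_of_mapsTo_UHP hd hg hw (ofReal_add_I_mul_mem_UHP x hy)
    simp only [add_im, ofReal_im, mul_im, I_re, I_im, ofReal_re, zero_mul, one_mul, zero_add]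
      at hschwarzPick
    rw [← mul_sub, normSq_mul, normSq_ofReal, im_ofReal_mul]
    nlinarith
  have hleft := ((continuous_normSq.tendsto _).comp
    (hL.sub (tendsto_ofReal_nhdsGT_zero.mul_const (conj (g w))))).const_mul w.im
  have hright := (((continuous_im.tendsto L).comp hL).mul_const (g w).im).mul
    ((continuous_normSq.tendsto _).comp ((tendsto_ray_nhds x).sub_const (conj w)))
  rw [zero_mul, sub_zero] at hleft
  have hconj : normSq ((x : ℂ) - conj w) = normSq (w - x) := by
    rw [← normSq_conj, ← normSq_neg]
    simp
  rw [← hconj]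
  exact le_of_tendsto_of_tendsto hleft hright (eventually_nhdsWithin_of_forall hpointwise)

lemma IsPick.sub_pole {f : ℂ → ℂ} (hf : IsPick f) {x b : ℝ}
    (hL : Tendsto (fun y : ℝ => (y : ℂ) * f (x + I * y)) (𝓝[>] 0) (𝓝 (-I * b))) :
    IsPick fun z => f z - b / (z - x) := by
  refine ⟨hf.1.sub (differentiableOn_pole x b), fun w hw => ?_⟩
  have hN : 0 < normSq (w - x) := normSq_pos.mpr (sub_ofReal_ne_zero hw x)
  rw [sub_im, im_ofReal_div_sub_ofReal, sub_nonneg]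
  have hb : b ≤ 0 := by simpa using hf.im_nonneg_of_tendsto_mul_ray hL
  rcases hb.eq_or_lt with rfl | hb
  · simpa using hf.2 w hw
  -- Julia's inequality needs a map into the open half-plane, so apply it to `f + iε`.
  refine le_of_forall_pos_le_add fun ε hε => ?_
  have hmaps : MapsTo (fun z => f z + I * ε) UHP UHP := fun z hz => by
    simpa [UHP] using add_pos_of_nonneg_of_pos (hf.2 z hz) hε
  have hLε : Tendsto (fun y : ℝ => (y : ℂ) * (f (x + I * y) + I * ε)) (𝓝[>] 0) (𝓝 (-I * b)) := by
    simpa [mul_add] using hL.add (tendsto_ofReal_nhdsGT_zero.mul_const (I * ε))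
  have hjulia := im_mul_normSq_le_of_tendsto_mul_ray (hf.1.add_const _) hmaps hLε hw
  simp only [normSq_mul, normSq_neg, normSq_I, normSq_ofReal, neg_mul, one_mul, neg_im, mul_im,
    I_re, I_im, ofReal_re, ofReal_im, mul_zero, zero_add, add_im] at hjulia
  rw [div_le_iff₀ hN]
  refine le_of_mul_le_mul_left ?_ (neg_pos.mpr hb)
  linarith

theorem pole_term_reduction_general (x : ℝ) (n : ℕ) (am1 : ℝ) (a : ℕ → ℝ) :
    ((∃ f : ℂ → ℂ, IsPick f ∧
        NTLittleO (fun z =>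
          f z - (am1 : ℂ) / (z - (x : ℂ)) -
            ∑ j ∈ Finset.range (n + 1), (a j : ℂ) * (z - (x : ℂ)) ^ j) x n) ↔
      (am1 ≤ 0 ∧ ∃ F : ℂ → ℂ, IsPick F ∧
        NTLittleO (fun z =>
          F z - ∑ j ∈ Finset.range (n + 1), (a j : ℂ) * (z - (x : ℂ)) ^ j) x n)) ∧
    (∀ (b : ℝ) (f : ℂ → ℂ), IsPick f →
      NTLittleO (fun z =>
        f z - (b : ℂ) / (z - (x : ℂ)) -
          ∑ j ∈ Finset.range (n + 1), (a j : ℂ) * (z - (x : ℂ)) ^ j) x n →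
      b ≤ 0 ∧ IsPick (fun z => f z - (b : ℂ) / (z - (x : ℂ)))) := by
  have hP : Continuous fun z : ℂ => ∑ j ∈ Finset.range (n + 1), (a j : ℂ) * (z - x) ^ j := by
    fun_prop
  have reduction : ∀ (b : ℝ) (f : ℂ → ℂ), IsPick f →
      NTLittleO (fun z =>
        f z - (b : ℂ) / (z - (x : ℂ)) -
          ∑ j ∈ Finset.range (n + 1), (a j : ℂ) * (z - (x : ℂ)) ^ j) x n →
      b ≤ 0 ∧ IsPick (fun z => f z - (b : ℂ) / (z - (x : ℂ))) := by
    intro b f hf h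
    have hL := tendsto_ofReal_mul_ray_of_ntLittleO hP h
    exact ⟨by simpa using hf.im_nonneg_of_tendsto_mul_ray hL, hf.sub_pole hL⟩
  refine ⟨⟨fun ⟨f, hf, h⟩ => ?_, fun ⟨hb, F, hF, h⟩ => ?_⟩, reduction⟩
  · obtain ⟨hb, hF⟩ := reduction am1 f hf h
    exact ⟨hb, _, hF, h⟩
  · refine ⟨fun z => F z + am1 / (z - x), hF.add (isPick_pole x hb), ?_⟩
    simpa only [add_sub_cancel_right] using h

theorem pole_term_reduction (x : ℝ) (n : ℕ) (am1 : ℝ) (ham1 : am1 ≤ 0) (a : ℕ → ℝ) :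
    ((∃ f : ℂ → ℂ, IsPick f ∧
        NTLittleO (fun z =>
          f z - (am1 : ℂ) / (z - (x : ℂ)) -
            ∑ j ∈ Finset.range (n + 1), (a j : ℂ) * (z - (x : ℂ)) ^ j) x n) ↔
      (am1 ≤ 0 ∧ ∃ F : ℂ → ℂ, IsPick F ∧
        NTLittleO (fun z =>
          F z - ∑ j ∈ Finset.range (n + 1), (a j : ℂ) * (z - (x : ℂ)) ^ j) x n)) ∧
    (∀ (b : ℝ) (f : ℂ → ℂ), IsPick f →
      NTLittleO (fun z =>
        f z - (b : ℂ) / (z - (x : ℂ)) -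
          ∑ j ∈ Finset.range (n + 1), (a j : ℂ) * (z - (x : ℂ)) ^ j) x n →
      b ≤ 0 ∧ IsPick (fun z => f z - (b : ℂ) / (z - (x : ℂ)))) :=
  pole_term_reduction_general x n am1 a
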